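/- arXiv:1706.01431 — 3 statements merged into one kernel-verified Lean document; each statement's English description precedes it below -/
import Mathlib

section
/- Let G be a finite group with 1 ∈ CD(G). If H ∈ CD(G) and H ≠ G, then the index |G : H| is divisible by at least two distinct primes; consequently, H is not a maximal subgroup of G. -/
/-!
With `1 ∈ CD(G)` the maximal measure is `|G|`, so `Z(G) = 1` and `|G : H| = |C_G(H)|` for every
`H ∈ CD(G)`. The measure is supermodular, `m(X) m(Y) ≤ m(X ⊓ Y) m(X ⊔ Y)`, because both
`|X| |Y| ≤ |X ⊔ Y| |X ⊓ Y|` and `|C(X)| |C(Y)| ≤ |C(X ⊓ Y)| |C(X ⊔ Y)|`; hence `CD(G)`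
is closed under joins and any two of its members permute: `|X| |Y| = |X ⊔ Y| |X ⊓ Y|`.

If `|G : H|` were a power of `p`, then `C_G(H)` would be a nontrivial `p`-subgroup in `CD(G)`.
Among the members of `CD(G)` inside a Sylow `p`-subgroup `P` containing it, a maximal one `L`
is normalized by `P` (join it with its `P`-conjugates), so `P` centralizes some `z ≠ 1` of
`L`; then `|G : C_G(z)|` divides both `|G : C_G(L)| = |L|` and `|G : P|`, so `z` is central,
a contradiction.

A maximal subgroup `H ∈ CD(G)` is normal: for `H^g ≠ H` we would get `H H^g = H ⊔ H^g = G`,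
which forces `g ∈ H`. Then for `p ∣ |G : H| = |C_G(H)|` a Sylow `p`-subgroup centralizes some
`z ≠ 1` of the normal subgroup `C_G(H)`; maximality gives `C_G(z) = H`, so `H` contains a Sylow
`p`-subgroup, contradicting `p ∣ |G : H|`.
-/

open Pointwise

/-- The Chermak-Delgado measure of a subgroup: `m_G(H) = |H| * |C_G(H)|`. -/
noncomputable def cdMeasure {G : Type*} [Group G] (H : Subgroup G) : Nat :=
  Nat.card H * Nat.card (Subgroup.centralizer (H : Set G))

/-- The Chermak-Delgado lattice of `G`: the subgroups of maximal Chermak-Delgado measure. -/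
def CD (G : Type*) [Group G] : Set (Subgroup G) :=
  {H | ∀ K : Subgroup G, cdMeasure K ≤ cdMeasure H}

namespace Subgroup

variable {G : Type*} [Group G]

theorem card_inf_mul_relIndex (X Y : Subgroup G) :
    Nat.card ↥(X ⊓ Y) * Y.relIndex X = Nat.card X := by
  simpa [inf_relIndex_left] using relIndex_mul_relIndex ⊥ (X ⊓ Y) X bot_le inf_le_left

theorem card_mul_card_le_card_sup_mul_card_inf [Finite G] (X Y : Subgroup G) :
    Nat.card X * Nat.card Y ≤ Nat.card ↥(X ⊔ Y) * Nat.card ↥(X ⊓ Y) := by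
  have hsup := card_inf_mul_relIndex (X ⊔ Y) Y
  rw [inf_of_le_right le_sup_right] at hsup
  calc Nat.card X * Nat.card Y = Nat.card ↥(X ⊓ Y) * Y.relIndex X * Nat.card Y := by
        rw [card_inf_mul_relIndex]
    _ ≤ Nat.card ↥(X ⊓ Y) * Y.relIndex (X ⊔ Y) * Nat.card Y := by
        gcongr
        exact relIndex_le_of_le_right le_sup_left (by exact index_ne_zero_of_finite)
    _ = Nat.card ↥(X ⊔ Y) * Nat.card ↥(X ⊓ Y) := by rw [← hsup]; ring

theorem exists_inv_mul_mem_of_card_mul_card_inf_le [Finite G] {X Y : Subgroup G}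
    (h : Nat.card G * Nat.card ↥(X ⊓ Y) ≤ Nat.card X * Nat.card Y) (g : G) :
    ∃ x ∈ X, x⁻¹ * g ∈ Y := by
  have hrel : Y.relIndex X = Y.relIndex ⊤ := by
    refine le_antisymm (relIndex_le_of_le_right le_top (by exact index_ne_zero_of_finite)) ?_
    refine Nat.le_of_mul_le_mul_left ?_
      (Nat.mul_pos (Nat.card_pos (α := ↥(X ⊓ Y))) (Nat.card_pos (α := Y)))
    calc Nat.card ↥(X ⊓ Y) * Nat.card Y * Y.relIndex ⊤
        = Nat.card G * Nat.card ↥(X ⊓ Y) := by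
          rw [relIndex_top_right, mul_assoc, card_mul_index, mul_comm]
      _ ≤ Nat.card X * Nat.card Y := h
      _ = Nat.card ↥(X ⊓ Y) * Nat.card Y * Y.relIndex X := by
          rw [← card_inf_mul_relIndex X Y]; ring
  let e := quotientSubgroupOfEmbeddingOfLE Y (le_top : X ≤ ⊤)
  have he : Function.Surjective e :=
    ((Nat.bijective_iff_injective_and_card e).mpr ⟨e.injective, hrel⟩).2
  obtain ⟨q, hq⟩ := he (QuotientGroup.mk ⟨g, mem_top g⟩)
  induction q using QuotientGroup.induction_on with
  | H x =>
    rw [quotientSubgroupOfEmbeddingOfLE_apply_mk, QuotientGroup.eq, mem_subgroupOf] at hq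
    exact ⟨x, x.2, by simpa using hq⟩

theorem centralizer_sup (X Y : Subgroup G) :
    centralizer ↑(X ⊔ Y) = centralizer (X : Set G) ⊓ centralizer (Y : Set G) := by
  have h : X ⊔ Y = closure (X ∪ Y : Set G) := by rw [closure_union, closure_eq, closure_eq]
  rw [h, centralizer_closure]
  exact SetLike.coe_injective Set.centralizer_union

theorem centralizer_map_mulEquiv {G' : Type*} [Group G'] (e : G ≃* G') (H : Subgroup G) :
    centralizer (H.map (e : G →* G') : Set G') =
      (centralizer (H : Set G)).map (e : G →* G') := by
  ext x
  obtain ⟨y, rfl⟩ := e.surjective x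
  simp [mem_centralizer_iff, ← map_mul]

end Subgroup

open Subgroup

theorem IsPGroup.exists_ne_one_le_centralizer {G : Type*} [Group G] [Finite G] {p : ℕ}
    [Fact p.Prime] {P B : Subgroup G} (hP : IsPGroup p P) (hPB : P ≤ normalizer (B : Set G))
    (hpB : p ∣ Nat.card B) : ∃ z ∈ B, z ≠ 1 ∧ P ≤ centralizer {z} := by
  have hP' : IsPGroup p (P.subgroupOf (normalizer (B : Set G))) := hP.comap_subtype
  obtain ⟨z, hz, hz1⟩ := hP'.exists_fixed_point_of_prime_dvd_card_of_fixed_point B hpB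
    (a := 1) (fun _ => smul_one _)
  refine ⟨z, z.2, fun h => hz1 (Subtype.ext h.symm), fun x hx => ?_⟩
  have h : x * z * x⁻¹ = z := congrArg Subtype.val (hz ⟨⟨x, hPB hx⟩, hx⟩)
  exact mem_centralizer_singleton_iff.mpr (mul_inv_eq_iff_eq_mul.mp h)

section CD

variable {G : Type*} [Group G]

theorem cdMeasure_map_mulEquiv {G' : Type*} [Group G'] (e : G ≃* G') (H : Subgroup G) :
    cdMeasure (H.map (e : G →* G')) = cdMeasure H := by
  rw [cdMeasure, cdMeasure, centralizer_map_mulEquiv, card_map_of_injective e.injective,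
    card_map_of_injective e.injective]

theorem map_mem_CD (e : G ≃* G) {H : Subgroup G} (hH : H ∈ CD G) :
    H.map (e : G →* G) ∈ CD G := by
  intro K
  rw [cdMeasure_map_mulEquiv]
  exact hH K

variable [Finite G]

theorem cdMeasure_pos (H : Subgroup G) : 0 < cdMeasure H :=
  Nat.mul_pos Nat.card_pos Nat.card_pos

theorem centralizer_mem_CD {H : Subgroup G} (hH : H ∈ CD G) :
    centralizer (H : Set G) ∈ CD G := by
  intro K
  refine (hH K).trans ?_
  rw [cdMeasure, cdMeasure, mul_comm]
  exact Nat.mul_le_mul_left _ (card_le_of_le (le_centralizer_iff.mpr le_rfl))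

theorem card_centralizer_mul_le (X Y : Subgroup G) :
    Nat.card (centralizer (X : Set G)) * Nat.card (centralizer (Y : Set G)) ≤
      Nat.card (centralizer ((X ⊓ Y : Subgroup G) : Set G)) *
        Nat.card (centralizer ((X ⊔ Y : Subgroup G) : Set G)) := by
  refine (card_mul_card_le_card_sup_mul_card_inf _ _).trans ?_
  rw [centralizer_sup]
  exact Nat.mul_le_mul_right _ <|
    card_le_of_le (sup_le (centralizer_le inf_le_left) (centralizer_le inf_le_right))

theorem cdMeasure_mul_le (X Y : Subgroup G) :
    cdMeasure X * cdMeasure Y ≤ cdMeasure (X ⊓ Y) * cdMeasure (X ⊔ Y) := by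
  calc cdMeasure X * cdMeasure Y
      = (Nat.card X * Nat.card Y) *
          (Nat.card (centralizer (X : Set G)) * Nat.card (centralizer (Y : Set G))) := by
        rw [cdMeasure, cdMeasure]; ring
    _ ≤ (Nat.card ↥(X ⊔ Y) * Nat.card ↥(X ⊓ Y)) *
          (Nat.card (centralizer ((X ⊓ Y : Subgroup G) : Set G)) *
            Nat.card (centralizer ((X ⊔ Y : Subgroup G) : Set G))) :=
        Nat.mul_le_mul (card_mul_card_le_card_sup_mul_card_inf X Y) (card_centralizer_mul_le X Y)
    _ = cdMeasure (X ⊓ Y) * cdMeasure (X ⊔ Y) := by rw [cdMeasure, cdMeasure]; ring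

theorem sup_mem_CD {X Y : Subgroup G} (hX : X ∈ CD G) (hY : Y ∈ CD G) : X ⊔ Y ∈ CD G := by
  intro K
  refine Nat.le_of_mul_le_mul_left ?_ (cdMeasure_pos X)
  calc cdMeasure X * cdMeasure K ≤ cdMeasure X * cdMeasure Y := Nat.mul_le_mul_left _ (hY K)
    _ ≤ cdMeasure (X ⊓ Y) * cdMeasure (X ⊔ Y) := cdMeasure_mul_le X Y
    _ ≤ cdMeasure X * cdMeasure (X ⊔ Y) := Nat.mul_le_mul_right _ (hX _)

theorem card_mul_card_eq_of_mem_CD {X Y : Subgroup G} (hX : X ∈ CD G) (hY : Y ∈ CD G) :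
    Nat.card X * Nat.card Y = Nat.card ↥(X ⊔ Y) * Nat.card ↥(X ⊓ Y) := by
  have hpos : 0 < Nat.card (centralizer ((X ⊓ Y : Subgroup G) : Set G)) *
      Nat.card (centralizer ((X ⊔ Y : Subgroup G) : Set G)) :=
    Nat.mul_pos Nat.card_pos Nat.card_pos
  refine le_antisymm (card_mul_card_le_card_sup_mul_card_inf X Y)
    (Nat.le_of_mul_le_mul_right ?_ hpos)
  calc Nat.card ↥(X ⊔ Y) * Nat.card ↥(X ⊓ Y) *
        (Nat.card (centralizer ((X ⊓ Y : Subgroup G) : Set G)) *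
          Nat.card (centralizer ((X ⊔ Y : Subgroup G) : Set G)))
      = cdMeasure (X ⊓ Y) * cdMeasure (X ⊔ Y) := by rw [cdMeasure, cdMeasure]; ring
    _ ≤ cdMeasure X * cdMeasure Y := Nat.mul_le_mul (hX _) (hY _)
    _ = Nat.card X * Nat.card Y *
          (Nat.card (centralizer (X : Set G)) * Nat.card (centralizer (Y : Set G))) := by
        rw [cdMeasure, cdMeasure]; ring
    _ ≤ _ := Nat.mul_le_mul_left _ (card_centralizer_mul_le X Y)

theorem normal_of_isCoatom_of_mem_CD {H : Subgroup G} (hH : H ∈ CD G) (hmax : IsCoatom H) :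
    H.Normal := by
  rw [← normalizer_eq_top_iff]
  by_contra hN
  have hN : normalizer (H : Set G) = H := (hmax.le_iff.mp le_normalizer).resolve_left hN
  obtain ⟨g, hg⟩ : ∃ g, g ∉ H := by
    by_contra! h
    exact hmax.1 (eq_top_iff.mpr fun g _ => h g)
  set Y := H.map (MulAut.conj g : G →* G)
  have hYH : ¬ Y ≤ H := fun hle => hg <| hN ▸ mem_normalizer_iff_map_conj_eq.mpr
    (eq_of_le_of_card_ge hle (card_map_of_injective (MulAut.conj g).injective).ge)
  have hsup : H ⊔ Y = ⊤ := hmax.2 _ (left_lt_sup.mpr hYH)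
  obtain ⟨x, hx, h, hh, hxh⟩ := exists_inv_mul_mem_of_card_mul_card_inf_le (X := H) (Y := Y)
    (by rw [← card_top, ← hsup, ← card_mul_card_eq_of_mem_CD hH (map_mem_CD _ hH)]) g⁻¹
  rw [MonoidHom.coe_coe, MulAut.conj_apply] at hxh
  have : g = x⁻¹ * h⁻¹ := calc
    g = g * h * g⁻¹ * g * h⁻¹ := by group
    _ = x⁻¹ * h⁻¹ := by rw [hxh]; group
  exact hg (this ▸ H.mul_mem (H.inv_mem hx) (H.inv_mem hh))

end CD

section TrivialSubgroupInCD

variable {G : Type*} [Group G]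

theorem cdMeasure_bot : cdMeasure (⊥ : Subgroup G) = Nat.card G := by
  rw [cdMeasure, card_bot, one_mul, coe_bot, centralizer_eq_top_iff_subset.mpr
    (Set.singleton_subset_iff.mpr (center G).one_mem), card_top]

variable (hbot : (⊥ : Subgroup G) ∈ CD G)
include hbot

theorem card_mul_card_centralizer_of_mem_CD {H : Subgroup G} (hH : H ∈ CD G) :
    Nat.card H * Nat.card (centralizer (H : Set G)) = Nat.card G :=
  le_antisymm (cdMeasure_bot (G := G) ▸ hbot H) (cdMeasure_bot (G := G) ▸ hH ⊥)

variable [Finite G]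

theorem center_eq_bot_of_bot_mem_CD : center G = ⊥ := by
  have h := hbot ⊤
  rw [cdMeasure_bot, cdMeasure, card_top, coe_top, centralizer_univ] at h
  exact eq_bot_of_card_le _ (Nat.le_of_mul_le_mul_left (by rwa [mul_one]) Nat.card_pos)

theorem eq_one_of_centralizer_eq_top {z : G} (hz : centralizer {z} = ⊤) : z = 1 := by
  rw [← mem_bot, ← center_eq_bot_of_bot_mem_CD hbot, ← centralizer_univ, mem_centralizer_iff]
  exact fun g _ => (mem_centralizer_singleton_iff.mp (hz ▸ mem_top g))

theorem index_eq_card_centralizer_of_mem_CD {H : Subgroup G} (hH : H ∈ CD G) :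
    H.index = Nat.card (centralizer (H : Set G)) :=
  Nat.eq_of_mul_eq_mul_left (Nat.card_pos (α := H)) <| by
    rw [card_mul_index, card_mul_card_centralizer_of_mem_CD hbot hH]

theorem index_centralizer_eq_card_of_mem_CD {H : Subgroup G} (hH : H ∈ CD G) :
    (centralizer (H : Set G)).index = Nat.card H :=
  Nat.eq_of_mul_eq_mul_left (Nat.card_pos (α := centralizer (H : Set G))) <| by
    rw [card_mul_index, mul_comm, card_mul_card_centralizer_of_mem_CD hbot hH]

theorem eq_bot_of_isPGroup_of_mem_CD {p : ℕ} [Fact p.Prime] {B : Subgroup G} (hB : B ∈ CD G)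
    (hBp : IsPGroup p B) : B = ⊥ := by
  obtain ⟨P, hBP⟩ := hBp.exists_le_sylow
  obtain ⟨L, hBL, hL⟩ :=
    (Set.toFinite {X : Subgroup G | X ∈ CD G ∧ X ≤ P}).exists_le_maximal ⟨hB, hBP⟩
  obtain ⟨hLCD, hLP⟩ := hL.prop
  have hPL : (P : Subgroup G) ≤ normalizer (L : Set G) := by
    intro g hg
    have hgL : L.map (MulAut.conj g : G →* G) ≤ P := by
      rintro _ ⟨l, hl, rfl⟩
      exact P.mul_mem (P.mul_mem hg (hLP hl)) (P.inv_mem hg)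
    have hsup := hL.2 ⟨sup_mem_CD hLCD (map_mem_CD _ hLCD), sup_le hLP hgL⟩ le_sup_left
    exact mem_normalizer_iff_map_conj_eq.mpr <| eq_of_le_of_card_ge (le_sup_right.trans hsup)
      (card_map_of_injective (MulAut.conj g).injective).ge
  refine eq_bot_iff.mpr (hBL.trans (eq_bot_iff.mp (by_contra fun hL1 => ?_)))
  have hLp : IsPGroup p L := P.isPGroup'.to_le hLP
  have hpL : p ∣ Nat.card L := hLp.card_eq_or_dvd.resolve_left (card_eq_one.not.mpr hL1)
  obtain ⟨z, hzL, hz1, hPz⟩ := P.isPGroup'.exists_ne_one_le_centralizer hPL hpL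
  obtain ⟨n, hn⟩ := IsPGroup.iff_card.mp hLp
  have hdvd_pow : (centralizer {z}).index ∣ p ^ n := by
    rw [← hn, ← index_centralizer_eq_card_of_mem_CD hbot hLCD]
    exact index_dvd_of_le (centralizer_le (Set.singleton_subset_iff.mpr hzL))
  have hcop : Nat.Coprime (p ^ n) (P : Subgroup G).index :=
    ((Nat.Prime.coprime_iff_not_dvd Fact.out).mpr P.not_dvd_index).pow_left n
  exact hz1 <| eq_one_of_centralizer_eq_top hbot <| index_eq_one.mp <|
    Nat.eq_one_of_dvd_coprimes hcop hdvd_pow (index_dvd_of_le hPz)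

theorem exists_primes_ne_dvd_index_of_mem_CD {H : Subgroup G} (hH : H ∈ CD G) (hne : H ≠ ⊤) :
    ∃ p q : ℕ, p.Prime ∧ q.Prime ∧ p ≠ q ∧ p ∣ H.index ∧ q ∣ H.index := by
  by_contra! hcon
  obtain ⟨p, hp, hpH⟩ := Nat.exists_prime_and_dvd (index_eq_one.not.mpr hne)
  have := Fact.mk hp
  have hpow : H.index = p ^ H.index.primeFactorsList.length :=
    Nat.eq_prime_pow_of_unique_prime_dvd index_ne_zero_of_finite fun hq hqH =>
      by_contra fun hqp => hcon p _ hp hq (Ne.symm hqp) hpH hqH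
  rw [index_eq_card_centralizer_of_mem_CD hbot hH] at hpow
  have hC := eq_bot_of_isPGroup_of_mem_CD hbot (centralizer_mem_CD hH) (IsPGroup.of_card hpow)
  exact hne <| index_eq_one.mp <| by rw [index_eq_card_centralizer_of_mem_CD hbot hH, hC, card_bot]

theorem not_isCoatom_of_mem_CD {H : Subgroup G} (hH : H ∈ CD G) : ¬ IsCoatom H := by
  intro hmax
  have := normal_of_isCoatom_of_mem_CD hH hmax
  obtain ⟨p, hp, hpH⟩ := Nat.exists_prime_and_dvd (index_eq_one.not.mpr hmax.1)
  have := Fact.mk hp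
  obtain ⟨P⟩ : Nonempty (Sylow p G) := inferInstance
  obtain ⟨z, hzC, hz1, hPz⟩ := P.isPGroup'.exists_ne_one_le_centralizer
    (B := centralizer (H : Set G)) (by rw [normalizer_eq_top]; exact le_top)
    (index_eq_card_centralizer_of_mem_CD hbot hH ▸ hpH)
  have hHz : H ≤ centralizer {z} :=
    (le_centralizer_iff.mpr le_rfl).trans (centralizer_le (Set.singleton_subset_iff.mpr hzC))
  have hzH : centralizer {z} = H :=
    (hmax.le_iff.mp hHz).resolve_left fun h => hz1 (eq_one_of_centralizer_eq_top hbot h)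
  exact P.not_dvd_index (hpH.trans (index_dvd_of_le (hzH ▸ hPz)))

end TrivialSubgroupInCD

theorem stmt17 {G : Type*} [Group G] [Fintype G]
    (hbot : (⊥ : Subgroup G) ∈ CD G)
    (H : Subgroup G) (hH : H ∈ CD G) (hne : H ≠ ⊤) :
    (∃ p q : Nat, p.Prime ∧ q.Prime ∧ p ≠ q ∧ p ∣ H.index ∧ q ∣ H.index) ∧
      ¬ IsCoatom H :=
  ⟨exists_primes_ne_dvd_index_of_mem_CD hbot hH hne, not_isCoatom_of_mem_CD hbot hH⟩
end

section
/- Let p be a prime, let P be a nontrivial finite p-group, and let G be a finite group containing P as a normal subgroup with a complement T (so G = PT, P ∩ T = 1, and T acts on P by conjugation). Suppose that the conjugation action of T on Z(P) is faithful (only the identity of T centralizes Z(P)) and irreducible (the only T-invariant subgroups of Z(P) are 1 and Z(P)). If A is a nontrivial abelian normal subgroup of G, then Z(P) ≤ A ≤ C_G(A) ≤ P. -/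
/-!
`C_G(Z(P)) ≤ P`: an element `x t` (`x ∈ P`, `t ∈ T`) centralizing `Z(P)` has `t` centralizing
`Z(P)`, so `t = 1` by faithfulness. In particular `C_G(P) ≤ P`, so the nontrivial normal subgroup
`A` cannot commute with all of `P`; as `[A, P] ≤ A ∩ P`, it meets `P` nontrivially. Then `A ∩ P` is a nontrivial normal subgroup of the `p`-group `P` and so
meets `Z(P)`; irreducibility forces `A ∩ Z(P) = Z(P)`. Finally `C_G(A) ≤ C_G(Z(P)) ≤ P`.
-/

open Pointwise Subgroup

theorem IsPGroup.inf_center_ne_bot {p : ℕ} [Fact p.Prime] {Q : Type*} [Group Q] [Finite Q]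
    (hQ : IsPGroup p Q) {K : Subgroup Q} [K.Normal] (hK : K ≠ ⊥) : K ⊓ center Q ≠ ⊥ := by
  have : Nontrivial K := K.nontrivial_iff_ne_bot.mpr hK
  obtain ⟨n, hn, hcard⟩ := (hQ.to_subgroup K).nontrivial_iff_card.mp inferInstance
  -- `p` divides the number of fixed points of `Q` acting on `K` by conjugation; `1` is one of them.
  obtain ⟨b, hb, hb1⟩ :=
    (hQ.of_equiv ConjAct.toConjAct).exists_fixed_point_of_prime_dvd_card_of_fixed_point
      (α := K) (hcard ▸ dvd_pow_self p hn.ne') (a := 1) fun g => smul_one g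
  have hbZ : (b : Q) ∈ center Q := by
    rw [← SetLike.mem_coe, ← ConjAct.fixedPoints_eq_center]
    intro g
    rw [← ConjAct.Subgroup.val_conj_smul, hb g]
  rw [Ne, eq_bot_iff]
  exact fun h => hb1 (Subtype.ext ((mem_bot.mp (h ⟨b.2, hbZ⟩)).symm))

namespace Subgroup

variable {G : Type*} [Group G]

theorem le_centralizer_map_center (P : Subgroup G) :
    P ≤ centralizer ((center P).map P.subtype : Set G) := by
  rintro x hx _ ⟨z, hz, rfl⟩
  exact congrArg Subtype.val (mem_center_iff.mp hz ⟨x, hx⟩).symm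

theorem centralizer_le_of_mul_eq_univ {P T Z : Subgroup G} (hPZ : P ≤ centralizer (Z : Set G))
    (hprod : (P : Set G) * (T : Set G) = Set.univ)
    (hfaithful : ∀ t ∈ T, (∀ z ∈ Z, t * z * t⁻¹ = z) → t = 1) :
    centralizer (Z : Set G) ≤ P := by
  intro c hc
  obtain ⟨x, hx, t, ht, rfl⟩ : c ∈ (P : Set G) * (T : Set G) := hprod ▸ Set.mem_univ c
  have htZ : t ∈ centralizer (Z : Set G) := by
    simpa using mul_mem (inv_mem (hPZ hx)) hc
  have ht1 : t = 1 := hfaithful t ht fun z hz => by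
    rw [(mem_centralizer_iff.mp htZ z hz).symm, mul_inv_cancel_right]
  simpa [ht1] using hx

theorem inf_ne_bot_of_centralizer_le {A P : Subgroup G} [A.Normal] [P.Normal]
    (hP : centralizer (P : Set G) ≤ P) (hA : A ≠ ⊥) : A ⊓ P ≠ ⊥ := by
  intro hAP
  have hAC : A ≤ centralizer (P : Set G) := fun a ha =>
    mem_centralizer_iff.mpr fun g hg =>
      (commute_of_normal_of_disjoint A P ‹_› ‹_› (disjoint_iff.mpr hAP) a g ha hg).symm
  exact hA (eq_bot_iff.mpr (hAP ▸ le_inf le_rfl (hAC.trans hP)))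

theorem inf_map_center_ne_bot {p : ℕ} [Fact p.Prime] {P : Subgroup G} [Finite P]
    (hP : IsPGroup p P) {A : Subgroup G} [A.Normal] (hAP : A ⊓ P ≠ ⊥) :
    A ⊓ (center P).map P.subtype ≠ ⊥ := by
  have hK : A.subgroupOf P ≠ ⊥ := by
    rwa [Ne, ← (map_eq_bot_iff_of_injective _ P.subtype_injective), subgroupOf_map_subtype]
  have := hP.inf_center_ne_bot hK
  rwa [Ne, ← (map_eq_bot_iff_of_injective _ P.subtype_injective),
    map_inf_eq _ _ _ P.subtype_injective, subgroupOf_map_subtype, inf_assoc,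
    inf_eq_right.mpr (map_subtype_le _)] at this

end Subgroup

theorem stmt18_general {G : Type*} [Group G] [Fintype G] (p : Nat) (hp : p.Prime)
    (P T : Subgroup G) (hPnormal : P.Normal)
    (hPp : ∃ k : Nat, Nat.card P = p ^ k)
    (hprod : (P : Set G) * (T : Set G) = Set.univ)
    (ZP : Subgroup G) (hZP : ZP = Subgroup.map P.subtype (Subgroup.center P))
    (hfaithful : ∀ t ∈ T, (∀ z ∈ ZP, t * z * t⁻¹ = z) → t = 1)
    (hirred : ∀ N : Subgroup G, N ≤ ZP →
        (∀ t ∈ T, ∀ x ∈ N, t * x * t⁻¹ ∈ N) → N = ⊥ ∨ N = ZP)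
    (A : Subgroup G) (hAne : A ≠ ⊥) (hAnormal : A.Normal)
    (hAab : ∀ x ∈ A, ∀ y ∈ A, Commute x y) :
    ZP ≤ A ∧ A ≤ Subgroup.centralizer (A : Set G) ∧
      Subgroup.centralizer (A : Set G) ≤ P := by
  have : Fact p.Prime := ⟨hp⟩
  obtain ⟨k, hk⟩ := hPp
  subst hZP
  have hCZ := centralizer_le_of_mul_eq_univ (le_centralizer_map_center P) hprod hfaithful
  have hAP : A ⊓ P ≠ ⊥ :=
    inf_ne_bot_of_centralizer_le ((centralizer_le (map_subtype_le _)).trans hCZ) hAne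
  have hAZ := inf_map_center_ne_bot (IsPGroup.of_card hk) hAP
  have hinv : ∀ t ∈ T, ∀ x ∈ A ⊓ (center P).map P.subtype,
      t * x * t⁻¹ ∈ A ⊓ (center P).map P.subtype :=
    fun t _ x hx => (normal_inf_normal _ _).conj_mem x hx t
  have hZA : (center P).map P.subtype ≤ A :=
    inf_eq_right.mp ((hirred _ inf_le_right hinv).resolve_left hAZ)
  exact ⟨hZA, fun a ha => mem_centralizer_iff.mpr fun g hg => hAab g hg a ha,
    (centralizer_le hZA).trans hCZ⟩

theorem stmt18 {G : Type*} [Group G] [Fintype G] (p : Nat) (hp : p.Prime)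
    (P T : Subgroup G) (hPnormal : P.Normal)
    (hPp : ∃ k : Nat, Nat.card P = p ^ k) (hPne : P ≠ ⊥)
    (hint : P ⊓ T = ⊥) (hprod : (P : Set G) * (T : Set G) = Set.univ)
    (ZP : Subgroup G) (hZP : ZP = Subgroup.map P.subtype (Subgroup.center P))
    (hfaithful : ∀ t ∈ T, (∀ z ∈ ZP, t * z * t⁻¹ = z) → t = 1)
    (hirred : ∀ N : Subgroup G, N ≤ ZP →
        (∀ t ∈ T, ∀ x ∈ N, t * x * t⁻¹ ∈ N) → N = ⊥ ∨ N = ZP)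
    (A : Subgroup G) (hAne : A ≠ ⊥) (hAnormal : A.Normal)
    (hAab : ∀ x ∈ A, ∀ y ∈ A, Commute x y) :
    ZP ≤ A ∧ A ≤ Subgroup.centralizer (A : Set G) ∧
      Subgroup.centralizer (A : Set G) ≤ P :=
  stmt18_general p hp P T hPnormal hPp hprod ZP hZP hfaithful hirred A hAne hAnormal hAab
end

section
/- Let p be a prime and n a positive integer, and let P be the group of all 3×3 lower triangular matrices over the finite field GF(p^n) with 1's along the diagonal (under matrix multiplication). Then the Chermak-Delgado lattice CD(P) is a quasi-antichain of width p^n + 1: its least element is Z(P), its greatest element is P, CD(P) has exactly p^n + 1 atoms, every atom of CD(P) is also a coatom of CD(P), and every subgroup in this middle antichain is abelian. -/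
open Pointwise

open Matrix in
/-- The group of 3×3 lower triangular matrices over `F` with 1's along the diagonal,
as a subgroup of `GL (Fin 3) F`. -/
def lowerUnitriangular (F : Type*) [Field F] : Subgroup (GL (Fin 3) F) where
  carrier := {M | (∀ i, (M : Matrix (Fin 3) (Fin 3) F) i i = 1) ∧
    ∀ i j, i < j → (M : Matrix (Fin 3) (Fin 3) F) i j = 0}
  one_mem' := by
    refine ⟨fun i => by simp, fun i j hij => by simp [Matrix.one_apply, hij.ne]⟩
  mul_mem' := by
    rintro A B ⟨hA1, hA0⟩ ⟨hB1, hB0⟩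
    have a01 := hA0 0 1 (by decide); have a02 := hA0 0 2 (by decide)
    have a12 := hA0 1 2 (by decide)
    have b01 := hB0 0 1 (by decide); have b02 := hB0 0 2 (by decide)
    have b12 := hB0 1 2 (by decide)
    constructor
    · intro i
      show ((A : Matrix (Fin 3) (Fin 3) F) * (B : Matrix (Fin 3) (Fin 3) F)) i i = 1
      fin_cases i <;>
        simp [Matrix.mul_apply, Fin.sum_univ_three, hA1, hB1, a01, a02, a12, b01, b02, b12]
    · intro i j hij
      show ((A : Matrix (Fin 3) (Fin 3) F) * (B : Matrix (Fin 3) (Fin 3) F)) i j = 0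
      fin_cases i <;> fin_cases j <;> first
        | exact absurd hij (by decide)
        | simp [Matrix.mul_apply, Fin.sum_univ_three, hA1, hB1, a01, a02, a12, b01, b02, b12]
  inv_mem' := by
    rintro M ⟨h1, h0⟩
    have m01 := h0 0 1 (by decide)
    have m02 := h0 0 2 (by decide)
    have m12 := h0 1 2 (by decide)
    set a : F := (M : Matrix (Fin 3) (Fin 3) F) 1 0 with ha
    set b : F := (M : Matrix (Fin 3) (Fin 3) F) 2 0 with hb
    set c : F := (M : Matrix (Fin 3) (Fin 3) F) 2 1 with hc
    have hN : ((M⁻¹ : GL (Fin 3) F) : Matrix (Fin 3) (Fin 3) F)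
        = !![1,0,0; -a,1,0; c*a-b,-c,1] := by
      apply Units.inv_eq_of_mul_eq_one_left
      ext i j
      rw [Matrix.mul_apply, Fin.sum_univ_three]
      fin_cases i <;> fin_cases j <;>
        simp [h1 0, h1 1, h1 2, m01, m02, m12, Matrix.one_apply, ← ha, ← hb, ← hc] <;> ring
    show (∀ i, ((M⁻¹ : GL (Fin 3) F) : Matrix (Fin 3) (Fin 3) F) i i = 1) ∧
      ∀ i j, i < j → ((M⁻¹ : GL (Fin 3) F) : Matrix (Fin 3) (Fin 3) F) i j = 0
    rw [hN]
    refine ⟨fun i => by fin_cases i <;> simp, fun i j hij => ?_⟩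
    fin_cases i <;> fin_cases j <;> first
      | exact absurd hij (by decide)
      | simp

namespace LUAux
open Matrix
variable {F : Type*} [Field F]

abbrev PG (F : Type*) [Field F] := ↥(lowerUnitriangular F)

def mat (x : PG F) : Matrix (Fin 3) (Fin 3) F := ((x : GL (Fin 3) F) : Matrix (Fin 3) (Fin 3) F)

lemma diag (x : PG F) (i : Fin 3) : mat x i i = 1 := x.2.1 i
lemma upper (x : PG F) (i j : Fin 3) (h : i < j) : mat x i j = 0 := x.2.2 i j h

def a (x : PG F) : F := mat x 1 0
def b (x : PG F) : F := mat x 2 0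
def c (x : PG F) : F := mat x 2 1

def mkMat (a b c : F) : Matrix (Fin 3) (Fin 3) F := !![1,0,0; a,1,0; b,c,1]

lemma mat_eq (x : PG F) : mat x = mkMat (a x) (b x) (c x) := by
  have h01 := upper x 0 1 (by decide)
  have h02 := upper x 0 2 (by decide)
  have h12 := upper x 1 2 (by decide)
  ext i j
  fin_cases i <;> fin_cases j <;>
    simp [mkMat, a, b, c, diag x 0, diag x 1, diag x 2, h01, h02, h12]

lemma ext' {x y : PG F} (h : mat x = mat y) : x = y := Subtype.ext (Units.ext h)

lemma mat_mul (x y : PG F) : mat (x * y) = mat x * mat y := rfl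

lemma eq_iff {x y : PG F} : x = y ↔ a x = a y ∧ b x = b y ∧ c x = c y := by
  constructor
  · rintro rfl; exact ⟨rfl, rfl, rfl⟩
  · rintro ⟨h1, h2, h3⟩
    apply ext'
    rw [mat_eq x, mat_eq y, h1, h2, h3]

lemma mkMat_mul (a b c a' b' c' : F) :
    mkMat a b c * mkMat a' b' c' = mkMat (a + a') (b + c * a' + b') (c + c') := by
  ext i j
  rw [Matrix.mul_apply, Fin.sum_univ_three]
  fin_cases i <;> fin_cases j <;> simp [mkMat] <;> ring

def mkGL (a b c : F) : GL (Fin 3) F :=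
  ⟨mkMat a b c, mkMat (-a) (c * a - b) (-c),
    by rw [mkMat_mul]; ext i j; fin_cases i <;> fin_cases j <;> simp [mkMat] <;> ring,
    by rw [mkMat_mul]; ext i j; fin_cases i <;> fin_cases j <;> simp [mkMat] <;> ring⟩

def mk (a b c : F) : PG F :=
  ⟨mkGL a b c,
    ⟨fun i => by fin_cases i <;> simp [mkGL, mkMat],
     fun i j h => by
      fin_cases i <;> fin_cases j <;>
        first
          | exact absurd h (by decide)
          | simp [mkGL, mkMat]⟩⟩

@[simp] lemma mat_mk (a' b' c' : F) : mat (mk a' b' c') = mkMat a' b' c' := rfl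
@[simp] lemma a_mk (a' b' c' : F) : a (mk a' b' c') = a' := by simp [a, mkMat]
@[simp] lemma b_mk (a' b' c' : F) : b (mk a' b' c') = b' := by simp [b, mkMat]
@[simp] lemma c_mk (a' b' c' : F) : c (mk a' b' c') = c' := by simp [c, mkMat]

lemma mk_abc (x : PG F) : mk (a x) (b x) (c x) = x := by
  apply ext'
  rw [mat_mk, ← mat_eq]

lemma mul_eq (x y : PG F) :
    x * y = mk (a x + a y) (b x + c x * a y + b y) (c x + c y) := by
  apply ext'
  rw [mat_mk, mat_mul, mat_eq x, mat_eq y, mkMat_mul]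

@[simp] lemma a_mul (x y : PG F) : a (x * y) = a x + a y := by rw [mul_eq]; simp
@[simp] lemma b_mul (x y : PG F) : b (x * y) = b x + c x * a y + b y := by rw [mul_eq]; simp
@[simp] lemma c_mul (x y : PG F) : c (x * y) = c x + c y := by rw [mul_eq]; simp

lemma commute_iff (x y : PG F) : Commute x y ↔ c x * a y = c y * a x := by
  unfold Commute SemiconjBy
  rw [eq_iff]
  simp only [a_mul, b_mul, c_mul]
  constructor
  · rintro ⟨-, h, -⟩; linear_combination h
  · intro h; exact ⟨by ring, by linear_combination h, by ring⟩

lemma mem_center_iff' {x : PG F} :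
    x ∈ Subgroup.center (PG F) ↔ a x = 0 ∧ c x = 0 := by
  rw [Subgroup.mem_center_iff]
  constructor
  · intro h
    have h1 : Commute (mk 1 0 0) x := h (mk 1 0 0)
    have h2 : Commute (mk 0 0 1) x := h (mk 0 0 1)
    rw [commute_iff] at h1 h2
    simp at h1 h2
    exact ⟨h2, h1.symm⟩
  · rintro ⟨h1, h2⟩ g
    have : Commute g x := by rw [commute_iff, h1, h2]; ring
    exact this

lemma mem_centralizer_singleton {x y : PG F} :
    y ∈ Subgroup.centralizer {x} ↔ c y * a x = c x * a y := by
  rw [Subgroup.mem_centralizer_singleton_iff]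
  exact commute_iff y x

def A (v1 v2 : F) : Subgroup (PG F) := Subgroup.centralizer {mk v1 0 v2}

lemma mem_A {v1 v2 : F} {y : PG F} : y ∈ A v1 v2 ↔ c y * v1 = v2 * a y := by
  rw [A, mem_centralizer_singleton]; simp


lemma mem_A_self (v1 v2 : F) : mk v1 0 v2 ∈ A v1 v2 := by
  rw [mem_A]; simp [mul_comm]

lemma center_le_A (v1 v2 : F) : Subgroup.center (PG F) ≤ A v1 v2 := by
  intro z hz
  rw [mem_center_iff'] at hz
  rw [mem_A, hz.1, hz.2]; ring

lemma A_comm {v1 v2 : F} (hv : v1 ≠ 0 ∨ v2 ≠ 0) {y z : PG F}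
    (hy : y ∈ A v1 v2) (hz : z ∈ A v1 v2) : Commute y z := by
  rw [mem_A] at hy hz
  rw [commute_iff]
  rcases hv with hv | hv
  · apply mul_left_cancel₀ hv
    linear_combination a z * hy - a y * hz
  · apply mul_left_cancel₀ hv
    linear_combination c z * hy - c y * hz

lemma centralizer_A {v1 v2 : F} (hv : v1 ≠ 0 ∨ v2 ≠ 0) :
    Subgroup.centralizer (A v1 v2 : Set (PG F)) = A v1 v2 := by
  apply le_antisymm
  · have : ({mk v1 0 v2} : Set (PG F)) ⊆ (A v1 v2 : Set (PG F)) := by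
      simp [mem_A_self v1 v2]
    exact (Subgroup.centralizer_le this).trans_eq rfl
  · intro y hy
    rw [Subgroup.mem_centralizer_iff]
    intro h hh
    exact (A_comm hv hy hh).symm

def toProd : PG F ≃ F × F × F where
  toFun x := (a x, b x, c x)
  invFun p := mk p.1 p.2.1 p.2.2
  left_inv x := mk_abc x
  right_inv p := by simp

lemma card_PG : Nat.card (PG F) = Nat.card F ^ 3 := by
  rw [Nat.card_congr (toProd (F := F)), Nat.card_prod, Nat.card_prod]
  ring

lemma card_center : Nat.card (Subgroup.center (PG F)) = Nat.card F := by
  apply Nat.card_eq_of_bijective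
    (f := fun z : Subgroup.center (PG F) => b z.1)
  constructor
  · rintro ⟨z, hz⟩ ⟨w, hw⟩ h
    simp only at h
    rw [mem_center_iff'] at hz hw
    ext1
    rw [eq_iff]
    exact ⟨hz.1.trans hw.1.symm, h, hz.2.trans hw.2.symm⟩
  · intro t
    refine ⟨⟨mk 0 t 0, ?_⟩, by simp⟩
    rw [mem_center_iff']; simp

lemma card_A {v1 v2 : F} (hv : v1 ≠ 0 ∨ v2 ≠ 0) :
    Nat.card (A v1 v2 : Subgroup (PG F)) = Nat.card F ^ 2 := by
  rw [show Nat.card F ^ 2 = Nat.card (F × F) by rw [Nat.card_prod]; ring]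
  symm
  by_cases h1 : v1 = 0
  · subst h1
    have h2 : v2 ≠ 0 := hv.resolve_left (by simp)
    have key : ∀ y : PG F, y ∈ A (0:F) v2 ↔ a y = 0 := by
      intro y; rw [mem_A, mul_zero]
      constructor
      · intro h
        rcases mul_eq_zero.mp h.symm with h | h
        · exact absurd h h2
        · exact h
      · intro h; rw [h, mul_zero]
    apply Nat.card_eq_of_bijective
      (f := fun p : F × F => (⟨mk 0 p.1 p.2, (key _).mpr (by simp)⟩ : A (0:F) v2))
    constructor
    · rintro ⟨t, s⟩ ⟨t', s'⟩ h
      simp only [Subtype.mk.injEq, eq_iff, a_mk, b_mk, c_mk] at h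
      exact Prod.ext h.2.1 h.2.2
    · rintro ⟨y, hy⟩
      refine ⟨(b y, c y), ?_⟩
      ext1
      rw [eq_iff]
      simp [((key y).mp hy).symm]
  · apply Nat.card_eq_of_bijective
      (f := fun p : F × F => (⟨mk p.1 p.2 (v2 * p.1 / v1), by
        rw [mem_A]; simp only [a_mk, c_mk]; field_simp⟩ : A v1 v2))
    constructor
    · rintro ⟨t, s⟩ ⟨t', s'⟩ h
      simp only [Subtype.mk.injEq, eq_iff, a_mk, b_mk, c_mk] at h
      exact Prod.ext h.1 h.2.1
    · rintro ⟨y, hy⟩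
      refine ⟨(a y, b y), ?_⟩
      ext1
      rw [eq_iff]
      refine ⟨by simp, by simp, ?_⟩
      rw [c_mk, div_eq_iff h1, ← mem_A.mp hy, mul_comm]

lemma centralizer_singleton_eq_A (x : PG F) :
    Subgroup.centralizer {x} = A (a x) (c x) := by
  ext y; rw [mem_centralizer_singleton, mem_A]

lemma not_mem_center {x : PG F} (hx : x ∉ Subgroup.center (PG F)) :
    a x ≠ 0 ∨ c x ≠ 0 := by
  by_contra h
  push_neg at h
  exact hx (mem_center_iff'.mpr ⟨h.1, h.2⟩)

section Fin
variable [Finite F]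

instance : Finite (PG F) := Finite.of_equiv _ (toProd (F := F)).symm

lemma q_pos : 0 < Nat.card F := Nat.card_pos
lemma one_lt_q : 1 < Nat.card F := Finite.one_lt_card

lemma card_le_cube (K : Subgroup (PG F)) : Nat.card K ≤ Nat.card F ^ 3 :=
  card_PG (F := F) ▸ Subgroup.card_le_card_group K

/-- If `K` has a noncommuting (in the symplectic sense) pair, its centralizer is central. -/
lemma centralizer_le_center {K : Subgroup (PG F)} {y z : PG F} (hy : y ∈ K) (hz : z ∈ K)
    (hyz : c y * a z ≠ c z * a y) :
    Subgroup.centralizer (K : Set (PG F)) ≤ Subgroup.center (PG F) := by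
  intro w hw
  rw [Subgroup.mem_centralizer_iff] at hw
  have e1 : c y * a w = c w * a y := (commute_iff y w).mp (hw y hy)
  have e2 : c z * a w = c w * a z := (commute_iff z w).mp (hw z hz)
  have hd : c y * a z - c z * a y ≠ 0 := sub_ne_zero.mpr hyz
  rw [mem_center_iff']
  constructor
  · have key : (c y * a z - c z * a y) * a w = 0 := by linear_combination a z * e1 - a y * e2
    exact (mul_eq_zero.mp key).resolve_left hd
  · have key : (c y * a z - c z * a y) * c w = 0 := by linear_combination c z * e1 - c y * e2
    exact (mul_eq_zero.mp key).resolve_left hd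

lemma cdMeasure_le (K : Subgroup (PG F)) : cdMeasure K ≤ Nat.card F ^ 4 := by
  by_cases hK : ∀ x ∈ K, x ∈ Subgroup.center (PG F)
  · have h1 : Nat.card K ≤ Nat.card F := by
      rw [← card_center (F := F)]
      exact Subgroup.card_le_of_le hK
    calc cdMeasure K ≤ Nat.card F * Nat.card F ^ 3 :=
          Nat.mul_le_mul h1 (card_le_cube _)
      _ = Nat.card F ^ 4 := by ring
  · push_neg at hK
    obtain ⟨x, hxK, hx⟩ := hK
    by_cases hpair : ∀ y ∈ K, ∀ z ∈ K, c y * a z = c z * a y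
    · -- K is contained in an abelian "line" subgroup
      have hv := not_mem_center hx
      have hC : Subgroup.centralizer (K : Set (PG F)) ≤ A (a x) (c x) := by
        rw [← centralizer_singleton_eq_A]
        exact Subgroup.centralizer_le (by simpa using hxK)
      have hKA : K ≤ A (a x) (c x) := by
        intro y hy
        rw [mem_A]
        exact hpair y hy x hxK
      have h1 : Nat.card K ≤ Nat.card F ^ 2 :=
        (Subgroup.card_le_of_le hKA).trans_eq (card_A hv)
      have h2 : Nat.card (Subgroup.centralizer (K : Set (PG F))) ≤ Nat.card F ^ 2 :=
        (Subgroup.card_le_of_le hC).trans_eq (card_A hv)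
      calc cdMeasure K ≤ Nat.card F ^ 2 * Nat.card F ^ 2 := Nat.mul_le_mul h1 h2
        _ = Nat.card F ^ 4 := by ring
    · push_neg at hpair
      obtain ⟨y, hy, z, hz, hyz⟩ := hpair
      have h2 : Nat.card (Subgroup.centralizer (K : Set (PG F))) ≤ Nat.card F := by
        rw [← card_center (F := F)]
        exact Subgroup.card_le_of_le (centralizer_le_center hy hz hyz)
      calc cdMeasure K ≤ Nat.card F ^ 3 * Nat.card F := Nat.mul_le_mul (card_le_cube _) h2
        _ = Nat.card F ^ 4 := by ring

lemma cdMeasure_center : cdMeasure (Subgroup.center (PG F)) = Nat.card F ^ 4 := by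
  rw [cdMeasure, card_center,
    Subgroup.centralizer_eq_top_iff_subset.mpr le_rfl, Subgroup.card_top, card_PG]
  ring

lemma center_mem_CD : Subgroup.center (PG F) ∈ CD (PG F) := by
  intro K
  rw [cdMeasure_center]
  exact cdMeasure_le K

lemma mem_CD_iff {H : Subgroup (PG F)} :
    H ∈ CD (PG F) ↔ cdMeasure H = Nat.card F ^ 4 := by
  constructor
  · intro h
    exact le_antisymm (cdMeasure_le H) (cdMeasure_center (F := F) ▸ h (Subgroup.center (PG F)))
  · intro h K
    rw [h]
    exact cdMeasure_le K

lemma cdMeasure_top : cdMeasure (⊤ : Subgroup (PG F)) = Nat.card F ^ 4 := by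
  rw [cdMeasure, Subgroup.card_top, card_PG, Subgroup.coe_top,
    Subgroup.centralizer_univ, card_center]
  ring

lemma top_mem_CD : (⊤ : Subgroup (PG F)) ∈ CD (PG F) :=
  mem_CD_iff.mpr cdMeasure_top

lemma cdMeasure_A {v1 v2 : F} (hv : v1 ≠ 0 ∨ v2 ≠ 0) :
    cdMeasure (A v1 v2 : Subgroup (PG F)) = Nat.card F ^ 4 := by
  rw [cdMeasure, card_A hv, centralizer_A hv, card_A hv]
  ring

lemma A_mem_CD {v1 v2 : F} (hv : v1 ≠ 0 ∨ v2 ≠ 0) :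
    (A v1 v2 : Subgroup (PG F)) ∈ CD (PG F) :=
  mem_CD_iff.mpr (cdMeasure_A hv)

end Fin
section Fin2
variable [Finite F]

lemma A_le_centralizer {v1 v2 : F} (hv : v1 ≠ 0 ∨ v2 ≠ 0) {H : Subgroup (PG F)}
    (hH : H ≤ A v1 v2) : A v1 v2 ≤ Subgroup.centralizer (H : Set (PG F)) := by
  intro y hy
  rw [Subgroup.mem_centralizer_iff]
  intro h hh
  exact A_comm hv (hH hh) hy

lemma classify {H : Subgroup (PG F)} (hH : H ∈ CD (PG F)) :
    H = Subgroup.center (PG F) ∨ H = ⊤ ∨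
      ∃ v1 v2 : F, (v1 ≠ 0 ∨ v2 ≠ 0) ∧ H = A v1 v2 := by
  have hm : Nat.card H * Nat.card (Subgroup.centralizer (H : Set (PG F)))
      = Nat.card F ^ 4 := mem_CD_iff.mp hH
  by_cases hK : ∀ x ∈ H, x ∈ Subgroup.center (PG F)
  · left
    have hcC : Nat.card (Subgroup.centralizer (H : Set (PG F))) ≤ Nat.card F ^ 3 :=
      card_le_cube _
    have h1 : Nat.card F * Nat.card F ^ 3 ≤ Nat.card H * Nat.card F ^ 3 := by
      calc Nat.card F * Nat.card F ^ 3 = Nat.card F ^ 4 := by ring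
        _ = _ := hm.symm
        _ ≤ _ := Nat.mul_le_mul_left _ hcC
    have h2 : Nat.card F ≤ Nat.card H :=
      Nat.le_of_mul_le_mul_right h1 (pow_pos q_pos 3)
    exact (Subgroup.eq_of_le_of_card_ge hK ((card_center (F := F)).symm ▸ h2)).symm ▸ rfl
  · push_neg at hK
    obtain ⟨x, hxK, hx⟩ := hK
    by_cases hpair : ∀ y ∈ H, ∀ z ∈ H, c y * a z = c z * a y
    · right; right
      have hv := not_mem_center hx
      refine ⟨a x, c x, hv, ?_⟩
      have hKA : H ≤ A (a x) (c x) := fun y hy => mem_A.mpr (hpair y hy x hxK)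
      have hC : Subgroup.centralizer (H : Set (PG F)) ≤ A (a x) (c x) := by
        rw [← centralizer_singleton_eq_A]
        exact Subgroup.centralizer_le (by simpa using hxK)
      have hcC : Nat.card (Subgroup.centralizer (H : Set (PG F))) ≤ Nat.card F ^ 2 :=
        (Subgroup.card_le_of_le hC).trans_eq (card_A hv)
      have h1 : Nat.card F ^ 2 * Nat.card F ^ 2 ≤ Nat.card H * Nat.card F ^ 2 := by
        calc Nat.card F ^ 2 * Nat.card F ^ 2 = Nat.card F ^ 4 := by ring
          _ = _ := hm.symm
          _ ≤ _ := Nat.mul_le_mul_left _ hcC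
      have h2 : Nat.card F ^ 2 ≤ Nat.card H :=
        Nat.le_of_mul_le_mul_right h1 (pow_pos q_pos 2)
      exact Subgroup.eq_of_le_of_card_ge hKA ((card_A hv).symm ▸ h2)
    · right; left
      push_neg at hpair
      obtain ⟨y, hy, z, hz, hyz⟩ := hpair
      have hcC : Nat.card (Subgroup.centralizer (H : Set (PG F))) ≤ Nat.card F := by
        rw [← card_center (F := F)]
        exact Subgroup.card_le_of_le (centralizer_le_center hy hz hyz)
      have h1 : Nat.card F ^ 3 * Nat.card F ≤ Nat.card H * Nat.card F := by
        calc Nat.card F ^ 3 * Nat.card F = Nat.card F ^ 4 := by ring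
          _ = _ := hm.symm
          _ ≤ _ := Nat.mul_le_mul_left _ hcC
      have h2 : Nat.card F ^ 3 ≤ Nat.card H :=
        Nat.le_of_mul_le_mul_right h1 q_pos
      exact Subgroup.eq_top_of_le_card H ((card_PG (F := F)).symm ▸ h2)

lemma A_eq_of_le {v1 v2 w1 w2 : F} (hv : v1 ≠ 0 ∨ v2 ≠ 0) (hw : w1 ≠ 0 ∨ w2 ≠ 0)
    (h : (A v1 v2 : Subgroup (PG F)) ≤ A w1 w2) : (A v1 v2 : Subgroup (PG F)) = A w1 w2 :=
  Subgroup.eq_of_le_of_card_ge h (by rw [card_A hv, card_A hw])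

lemma A_ne_top {v1 v2 : F} (hv : v1 ≠ 0 ∨ v2 ≠ 0) : (A v1 v2 : Subgroup (PG F)) ≠ ⊤ := by
  intro h
  have := card_A (F := F) hv
  rw [h, Subgroup.card_top, card_PG] at this
  have h23 : Nat.card F ^ 2 < Nat.card F ^ 3 :=
    Nat.pow_lt_pow_right one_lt_q (by norm_num)
  omega

lemma A_lt_top {v1 v2 : F} (hv : v1 ≠ 0 ∨ v2 ≠ 0) : (A v1 v2 : Subgroup (PG F)) < ⊤ :=
  lt_of_le_of_ne le_top (A_ne_top hv)

lemma mk_not_mem_center {v1 v2 : F} (hv : v1 ≠ 0 ∨ v2 ≠ 0) :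
    (mk v1 0 v2 : PG F) ∉ Subgroup.center (PG F) := by
  rw [mem_center_iff']
  simp only [a_mk, c_mk]
  rintro ⟨h1, h2⟩
  rcases hv with h | h <;> [exact h h1; exact h h2]

lemma center_lt_A {v1 v2 : F} (hv : v1 ≠ 0 ∨ v2 ≠ 0) :
    Subgroup.center (PG F) < A v1 v2 :=
  lt_of_le_of_ne (center_le_A v1 v2) fun h =>
    mk_not_mem_center hv (h ▸ mem_A_self v1 v2)

end Fin2

lemma A_scale {u v1 v2 : F} (hu : u ≠ 0) : (A (u * v1) (u * v2) : Subgroup (PG F)) = A v1 v2 := by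
  ext y
  rw [mem_A, mem_A, show c y * (u * v1) = u * (c y * v1) by ring,
    show u * v2 * a y = u * (v2 * a y) by ring, mul_right_inj' hu]

lemma A_canon {v1 v2 : F} (hv : v1 ≠ 0 ∨ v2 ≠ 0) :
    (∃ t : F, (A v1 v2 : Subgroup (PG F)) = A 1 t) ∨
      (A v1 v2 : Subgroup (PG F)) = A 0 1 := by
  by_cases h1 : v1 = 0
  · right
    subst h1
    have h2 : v2 ≠ 0 := hv.resolve_left (by simp)
    calc (A 0 v2 : Subgroup (PG F)) = A (v2 * 0) (v2 * 1) := by rw [mul_zero, mul_one]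
      _ = A 0 1 := A_scale h2
  · left
    refine ⟨v2 / v1, ?_⟩
    calc (A v1 v2 : Subgroup (PG F)) = A (v1 * 1) (v1 * (v2 / v1)) := by
          rw [mul_one, mul_div_cancel₀ _ h1]
      _ = A 1 (v2 / v1) := A_scale h1

lemma A_one_inj {t s : F} (h : (A (1:F) t : Subgroup (PG F)) = A 1 s) : t = s := by
  have hm : (mk (1:F) 0 t : PG F) ∈ A (1:F) s := h ▸ mem_A_self 1 t
  rw [mem_A] at hm
  simpa using hm

lemma A_one_ne (t : F) : (A (1:F) t : Subgroup (PG F)) ≠ A 0 1 := by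
  intro h
  have hm : (mk (1:F) 0 t : PG F) ∈ A (0:F) 1 := h ▸ mem_A_self 1 t
  rw [mem_A] at hm
  simp at hm

section Fin3
variable [Finite F]

def IsMid (H : Subgroup (PG F)) : Prop :=
  H ∈ CD (PG F) ∧ Subgroup.center (PG F) < H ∧
    ¬ ∃ R ∈ CD (PG F), Subgroup.center (PG F) < R ∧ R < H

lemma A_isMid {v1 v2 : F} (hv : v1 ≠ 0 ∨ v2 ≠ 0) : IsMid (A v1 v2 : Subgroup (PG F)) := by
  refine ⟨A_mem_CD hv, center_lt_A hv, ?_⟩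
  rintro ⟨R, hRCD, hZR, hRA⟩
  rcases classify hRCD with rfl | rfl | ⟨w1, w2, hw, rfl⟩
  · exact lt_irrefl _ hZR
  · exact absurd (lt_of_lt_of_le hRA le_top) (lt_irrefl _)
  · exact hRA.ne (A_eq_of_le hw hv hRA.le)

lemma isMid_iff {H : Subgroup (PG F)} :
    IsMid H ↔ ∃ v1 v2 : F, (v1 ≠ 0 ∨ v2 ≠ 0) ∧ H = A v1 v2 := by
  constructor
  · rintro ⟨hCD, hZH, hmin⟩
    rcases classify hCD with rfl | rfl | ⟨v1, v2, hv, rfl⟩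
    · exact absurd rfl hZH.ne'
    · exact absurd ⟨A (1:F) 0, A_mem_CD (Or.inl one_ne_zero),
        center_lt_A (Or.inl one_ne_zero), A_lt_top (Or.inl one_ne_zero)⟩ hmin
    · exact ⟨v1, v2, hv, rfl⟩
  · rintro ⟨v1, v2, hv, rfl⟩
    exact A_isMid hv

lemma isMid_coatom {H : Subgroup (PG F)} (hH : IsMid H) :
    (H < ⊤ ∧ ¬ ∃ R ∈ CD (PG F), H < R ∧ R < ⊤) ∧
      ∀ x ∈ H, ∀ y ∈ H, Commute x y := by
  obtain ⟨v1, v2, hv, rfl⟩ := isMid_iff.mp hH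
  refine ⟨⟨A_lt_top hv, ?_⟩, fun x hx y hy => A_comm hv hx hy⟩
  rintro ⟨R, hRCD, hAR, hRT⟩
  rcases classify hRCD with rfl | rfl | ⟨w1, w2, hw, rfl⟩
  · exact lt_irrefl _ (lt_of_lt_of_le hAR (center_le_A v1 v2))
  · exact lt_irrefl _ hRT
  · exact hAR.ne (A_eq_of_le hv hw hAR.le)

/-- the parametrization of the atoms by `Option F` -/
def atomF : Option F → Subgroup (PG F) := fun o => o.elim (A 0 1) fun t => A 1 t

lemma atomF_inj : Function.Injective (atomF (F := F)) := by
  rintro (_ | t) (_ | s) h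
  · rfl
  · exact absurd h.symm (A_one_ne s)
  · exact absurd h (A_one_ne t)
  · rw [A_one_inj h]

lemma midSet_eq : {H : Subgroup (PG F) | IsMid H} = Set.range (atomF (F := F)) := by
  ext H
  simp only [Set.mem_setOf_eq, Set.mem_range, isMid_iff]
  constructor
  · rintro ⟨v1, v2, hv, rfl⟩
    rcases A_canon hv with ⟨t, ht⟩ | h0
    · exact ⟨some t, ht.symm⟩
    · exact ⟨none, h0.symm⟩
  · rintro ⟨o, rfl⟩
    rcases o with _ | t
    · exact ⟨0, 1, Or.inr one_ne_zero, rfl⟩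
    · exact ⟨1, t, Or.inl one_ne_zero, rfl⟩

lemma card_midSet : Nat.card {H : Subgroup (PG F) | IsMid H} = Nat.card F + 1 := by
  rw [midSet_eq, Nat.card_range_of_injective atomF_inj]
  haveI : Fintype F := Fintype.ofFinite F
  rw [Nat.card_eq_fintype_card, Nat.card_eq_fintype_card, Fintype.card_option]

lemma center_le_of_mem_CD {H : Subgroup (PG F)} (hH : H ∈ CD (PG F)) :
    Subgroup.center (PG F) ≤ H := by
  rcases classify hH with rfl | rfl | ⟨v1, v2, hv, rfl⟩
  · exact le_rfl
  · exact le_top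
  · exact center_le_A v1 v2

end Fin3
end LUAux

theorem stmt19 (p n : Nat) [Fact p.Prime] (hn : 0 < n) :
    Subgroup.center ↥(lowerUnitriangular (GaloisField p n)) ∈
        CD ↥(lowerUnitriangular (GaloisField p n)) ∧
    (∀ X ∈ CD ↥(lowerUnitriangular (GaloisField p n)),
        Subgroup.center ↥(lowerUnitriangular (GaloisField p n)) ≤ X) ∧
    (⊤ : Subgroup ↥(lowerUnitriangular (GaloisField p n))) ∈
        CD ↥(lowerUnitriangular (GaloisField p n)) ∧
    Nat.card {A : Subgroup ↥(lowerUnitriangular (GaloisField p n)) |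
        A ∈ CD ↥(lowerUnitriangular (GaloisField p n)) ∧
        Subgroup.center ↥(lowerUnitriangular (GaloisField p n)) < A ∧
        ¬ ∃ R ∈ CD ↥(lowerUnitriangular (GaloisField p n)),
          Subgroup.center ↥(lowerUnitriangular (GaloisField p n)) < R ∧ R < A} = p ^ n + 1 ∧
    (∀ A ∈ CD ↥(lowerUnitriangular (GaloisField p n)),
      (Subgroup.center ↥(lowerUnitriangular (GaloisField p n)) < A ∧
        ¬ ∃ R ∈ CD ↥(lowerUnitriangular (GaloisField p n)),
          Subgroup.center ↥(lowerUnitriangular (GaloisField p n)) < R ∧ R < A) →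
      ((A < ⊤ ∧ ¬ ∃ R ∈ CD ↥(lowerUnitriangular (GaloisField p n)), A < R ∧ R < ⊤) ∧
        ∀ x ∈ A, ∀ y ∈ A, Commute x y)) := by
  set F := GaloisField p n with hF
  refine ⟨LUAux.center_mem_CD, fun X hX => LUAux.center_le_of_mem_CD hX,
    LUAux.top_mem_CD, ?_, ?_⟩
  · have : {A : Subgroup (LUAux.PG F) |
        A ∈ CD (LUAux.PG F) ∧
        Subgroup.center (LUAux.PG F) < A ∧
        ¬ ∃ R ∈ CD (LUAux.PG F),
          Subgroup.center (LUAux.PG F) < R ∧ R < A}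
        = {H : Subgroup (LUAux.PG F) | LUAux.IsMid H} := rfl
    rw [this, LUAux.card_midSet, GaloisField.card p n hn.ne']
  · intro A hA h
    exact LUAux.isMid_coatom ⟨hA, h.1, h.2⟩
end
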